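/- arXiv:math/0404543 — 4 statements merged into one kernel-verified Lean document; each statement's English description precedes it below -/
import Mathlib

section
/- Let (ν_l) be a nonincreasing sequence of nonnegative reals with ν_l ≤ C·e^{M - √l / C} for constants C ≥ 1 and M ≥ 0. Then ∑_l ν_l < ∞ and there is a constant C' depending only on C such that ∏_{l=0}^∞ (1 + ν_l) ≤ C' exp(C' M³). -/
lemma pow_four_le_exp {x : ℝ} (hx : 0 ≤ x) : x ^ 4 ≤ 256 * Real.exp x := by
  have h1 : x / 4 ≤ Real.exp (x / 4) := by
    have := Real.add_one_le_exp (x / 4); linarith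
  have h2 : (x / 4) ^ 4 ≤ (Real.exp (x / 4)) ^ 4 :=
    pow_le_pow_left₀ (by positivity) h1 4
  have h3 : (Real.exp (x / 4)) ^ 4 = Real.exp x := by
    rw [← Real.exp_nat_mul]
    congr 1
    push_cast
    ring
  nlinarith [h2, h3]

lemma summable_exp_neg_sqrt_div {c : ℝ} (hc : 0 < c) :
    Summable (fun n : ℕ => Real.exp (-(Real.sqrt n / c))) := by
  rw [← summable_nat_add_iff 1]
  have hbase : Summable (fun n : ℕ => 1 / ((n : ℝ) + 1) ^ 2) := by
    have h := (Real.summable_one_div_nat_pow (p := 2)).mpr one_lt_two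
    have h2 := (summable_nat_add_iff (f := fun n : ℕ => 1 / (n : ℝ) ^ 2) 1).mpr h
    refine h2.congr fun n => ?_
    push_cast
    ring_nf
  have hsum : Summable (fun n : ℕ => (256 * c ^ 4) * (1 / ((n : ℝ) + 1) ^ 2)) :=
    hbase.mul_left _
  apply Summable.of_nonneg_of_le (fun n => Real.exp_nonneg _) _ hsum
  intro n
  have hn1 : (0 : ℝ) < (n : ℝ) + 1 := by positivity
  set x : ℝ := Real.sqrt ((n : ℕ) + 1 : ℕ) / c with hxdef
  have hxcast : Real.sqrt ((n : ℕ) + 1 : ℕ) = Real.sqrt ((n : ℝ) + 1) := by push_cast; ring_nf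
  have hxnn : 0 ≤ x := by
    rw [hxdef]; positivity
  have hx4 : x ^ 4 = ((n : ℝ) + 1) ^ 2 / c ^ 4 := by
    rw [hxdef, hxcast, div_pow]
    congr 1
    rw [show (4 : ℕ) = 2 * 2 from rfl, pow_mul, Real.sq_sqrt hn1.le]
  have hkey : ((n : ℝ) + 1) ^ 2 ≤ 256 * c ^ 4 * Real.exp x := by
    have h := pow_four_le_exp hxnn
    rw [hx4] at h
    have hc4 : (0 : ℝ) < c ^ 4 := by positivity
    calc ((n : ℝ) + 1) ^ 2 = (((n : ℝ) + 1) ^ 2 / c ^ 4) * c ^ 4 := by field_simp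
      _ ≤ (256 * Real.exp x) * c ^ 4 := by
          apply mul_le_mul_of_nonneg_right h hc4.le
      _ = 256 * c ^ 4 * Real.exp x := by ring
  show Real.exp (-x) ≤ 256 * c ^ 4 * (1 / ((n : ℝ) + 1) ^ 2)
  rw [Real.exp_neg, ← one_div, mul_one_div, div_le_div_iff₀ (Real.exp_pos x) (by positivity)]
  nlinarith [hkey]

set_option maxHeartbeats 1000000

/-- If a nonincreasing sequence of nonnegative reals satisfies
`ν_l ≤ C·exp(M − √l/C)` with `C ≥ 1`, `M ≥ 0`, then it is summable and
`∏ (1 + ν_l) ≤ C' exp(C' M³)` for a constant `C'` depending only on `C`. -/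
theorem prod_one_add_le_of_singVal_decay :
    ∀ C : ℝ, 1 ≤ C → ∃ C' : ℝ, 0 < C' ∧
      ∀ M : ℝ, 0 ≤ M → ∀ ν : ℕ → ℝ, Antitone ν → (∀ l, 0 ≤ ν l) →
        (∀ l : ℕ, ν l ≤ C * Real.exp (M - Real.sqrt l / C)) →
        Summable ν ∧ ∏' l : ℕ, (1 + ν l) ≤ C' * Real.exp (C' * M^3) := by
  intro C hC
  have hCpos : (0 : ℝ) < C := by linarith
  -- tail constant
  set S : ℝ := ∑' k : ℕ, Real.exp (-(Real.sqrt k / (2 * C))) with hSdef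
  have hSsum : Summable (fun k : ℕ => Real.exp (-(Real.sqrt k / (2 * C)))) :=
    summable_exp_neg_sqrt_div (by linarith)
  have hSnn : 0 ≤ S := tsum_nonneg fun k => Real.exp_nonneg _
  set K : ℝ := 4 * C ^ 3 + 2 * C ^ 2 + 2 * C + 1 with hKdef
  have hKpos : 0 < K := by nlinarith
  refine ⟨Real.exp (K + C * S) + K, by positivity, ?_⟩
  intro M hM ν hmono hνnn hν
  set C' : ℝ := Real.exp (K + C * S) + K with hC'def
  -- summability
  have hsumν : Summable ν := by
    refine Summable.of_nonneg_of_le hνnn (fun l => ?_)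
      ((summable_exp_neg_sqrt_div hCpos).mul_left (C * Real.exp M))
    calc ν l ≤ C * Real.exp (M - Real.sqrt l / C) := hν l
      _ = C * Real.exp M * Real.exp (-(Real.sqrt l / C)) := by
          rw [show M - Real.sqrt l / C = M + -(Real.sqrt l / C) from by ring, Real.exp_add]
          ring
  refine ⟨hsumν, ?_⟩
  set L : ℕ := ⌈2 * C ^ 2 * M ^ 2⌉₊ with hLdef
  have hLreal : 2 * C ^ 2 * M ^ 2 ≤ (L : ℝ) := Nat.le_ceil _
  have hL1 : (L : ℝ) ≤ 2 * C ^ 2 * M ^ 2 + 1 := (Nat.ceil_lt_add_one (by positivity)).le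
  -- pointwise tail bound
  have htail : ∀ l : ℕ, L ≤ l → ν l ≤ C * Real.exp (-(Real.sqrt (l - L : ℕ) / (2 * C))) := by
    intro l hLl
    refine (hν l).trans (mul_le_mul_of_nonneg_left (Real.exp_le_exp.mpr ?_) hCpos.le)
    set k : ℕ := l - L with hkdef
    have hk : (Real.sqrt k) ^ 2 = (k : ℝ) := Real.sq_sqrt (Nat.cast_nonneg _)
    have hknn : 0 ≤ Real.sqrt k := Real.sqrt_nonneg _
    have hlk : (L : ℝ) + (k : ℝ) = (l : ℝ) := by
      have : L + k = l := Nat.add_sub_cancel' hLl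
      exact_mod_cast congrArg (Nat.cast : ℕ → ℝ) this
    have hsq : C * M + Real.sqrt k / 2 ≤ Real.sqrt l := by
      rw [Real.le_sqrt (by positivity) (Nat.cast_nonneg _)]
      nlinarith [sq_nonneg (C * M - Real.sqrt k)]
    have h5 : M + Real.sqrt k / (2 * C) ≤ Real.sqrt l / C := by
      have hdiv : (C * M + Real.sqrt k / 2) / C ≤ Real.sqrt l / C := by gcongr
      have heq : (C * M + Real.sqrt k / 2) / C = M + Real.sqrt k / (2 * C) := by
        field_simp
      linarith [heq ▸ hdiv]
    linarith
  -- bound for every finite partial product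
  have hM23 : M ^ 2 + M ≤ M ^ 3 + 1 := by
    nlinarith [mul_nonneg hM (sq_nonneg (M - 1)), sq_nonneg (M - 1)]
  have hBsplit : ∀ s : Finset ℕ,
      ∏ l ∈ s, (1 + ν l) ≤ Real.exp (K * (M ^ 3 + 1) + C * S) := by
    intro s
    have hsplit := Finset.prod_filter_mul_prod_filter_not s (fun l => l < L) (fun l => 1 + ν l)
    set s₁ := s.filter (fun l => l < L) with hs1
    set s₂ := s.filter (fun l => ¬ l < L) with hs2
    -- head bound
    have hhead : ∏ l ∈ s₁, (1 + ν l) ≤ Real.exp ((L : ℝ) * (2 * C + M)) := by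
      have hD : (1 : ℝ) ≤ Real.exp (2 * C + M) := Real.one_le_exp (by linarith)
      have h1 : ∀ l ∈ s₁, 1 + ν l ≤ Real.exp (2 * C + M) := by
        intro l _
        have h2 := hν l
        have h3 : Real.exp (M - Real.sqrt l / C) ≤ Real.exp M := by
          apply Real.exp_le_exp.mpr
          have : 0 ≤ Real.sqrt l / C := by positivity
          linarith
        have h4 : 2 * C + 1 ≤ Real.exp (2 * C) := by
          have := Real.add_one_le_exp (2 * C); linarith
        have hexpM : 1 ≤ Real.exp M := Real.one_le_exp hM
        have hEadd : Real.exp (2 * C + M) = Real.exp (2 * C) * Real.exp M := Real.exp_add _ _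
        nlinarith [Real.exp_pos M, hνnn l]
      have hcard : s₁.card ≤ L := by
        have hsub : s₁ ⊆ Finset.range L := by
          intro x hx
          exact Finset.mem_range.mpr (Finset.mem_filter.mp hx).2
        simpa using Finset.card_le_card hsub
      calc ∏ l ∈ s₁, (1 + ν l) ≤ ∏ _l ∈ s₁, Real.exp (2 * C + M) :=
            Finset.prod_le_prod (fun l _ => by linarith [hνnn l]) h1
        _ = Real.exp (2 * C + M) ^ s₁.card := Finset.prod_const _
        _ ≤ Real.exp (2 * C + M) ^ L := pow_le_pow_right₀ hD hcard
        _ = Real.exp ((L : ℝ) * (2 * C + M)) := by rw [← Real.exp_nat_mul]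
    -- tail bound
    have htailsum : ∑ l ∈ s₂, ν l ≤ C * S := by
      have hmem : ∀ l ∈ s₂, L ≤ l := by
        intro l hl
        have := (Finset.mem_filter.mp hl).2
        omega
      calc ∑ l ∈ s₂, ν l
          ≤ ∑ l ∈ s₂, C * Real.exp (-(Real.sqrt (l - L : ℕ) / (2 * C))) :=
            Finset.sum_le_sum fun l hl => htail l (hmem l hl)
        _ = C * ∑ l ∈ s₂, Real.exp (-(Real.sqrt (l - L : ℕ) / (2 * C))) := by
            rw [Finset.mul_sum]
        _ ≤ C * S := by
            apply mul_le_mul_of_nonneg_left _ hCpos.le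
            have hinj : ∀ a ∈ s₂, ∀ b ∈ s₂, a - L = b - L → a = b := by
              intro a ha b hb hab
              have h1 := hmem a ha
              have h2 := hmem b hb
              omega
            have himg : ∑ k ∈ s₂.image (· - L), Real.exp (-(Real.sqrt k / (2 * C)))
                = ∑ l ∈ s₂, Real.exp (-(Real.sqrt (l - L : ℕ) / (2 * C))) :=
              Finset.sum_image hinj
            rw [← himg]
            exact Summable.sum_le_tsum _ (fun k _ => Real.exp_nonneg _) hSsum
    have htailprod : ∏ l ∈ s₂, (1 + ν l) ≤ Real.exp (C * S) := by
      calc ∏ l ∈ s₂, (1 + ν l) ≤ ∏ l ∈ s₂, Real.exp (ν l) := by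
            apply Finset.prod_le_prod (fun l _ => by linarith [hνnn l])
            intro l _
            have := Real.add_one_le_exp (ν l); linarith
        _ = Real.exp (∑ l ∈ s₂, ν l) := (Real.exp_sum _ _).symm
        _ ≤ Real.exp (C * S) := Real.exp_le_exp.mpr htailsum
    have harg : (L : ℝ) * (2 * C + M) ≤ K * (M ^ 3 + 1) := by
      have h2CM : 0 ≤ 2 * C + M := by linarith
      have hstep : (L : ℝ) * (2 * C + M) ≤ (2 * C ^ 2 * M ^ 2 + 1) * (2 * C + M) :=
        mul_le_mul_of_nonneg_right hL1 h2CM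
      refine hstep.trans ?_
      rw [hKdef]
      nlinarith [hM23, hC, hM, mul_nonneg (mul_nonneg hM hM) hM,
        mul_nonneg (pow_pos hCpos 3).le (by nlinarith [hM23, hM] : (0:ℝ) ≤ M ^ 3 + 1 - M ^ 2)]
    calc ∏ l ∈ s, (1 + ν l) = (∏ l ∈ s₁, (1 + ν l)) * ∏ l ∈ s₂, (1 + ν l) := hsplit.symm
      _ ≤ Real.exp ((L : ℝ) * (2 * C + M)) * Real.exp (C * S) := by
          apply mul_le_mul hhead htailprod (Finset.prod_nonneg fun l _ => by linarith [hνnn l])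
            (Real.exp_nonneg _)
      _ = Real.exp ((L : ℝ) * (2 * C + M) + C * S) := (Real.exp_add _ _).symm
      _ ≤ Real.exp (K * (M ^ 3 + 1) + C * S) := Real.exp_le_exp.mpr (by linarith)
  -- convergence of the product and final bound
  set B : ℝ := Real.exp (K * (M ^ 3 + 1) + C * S) with hBdef
  have hmonoP : Monotone (fun s : Finset ℕ => ∏ l ∈ s, (1 + ν l)) := by
    intro s t hst
    dsimp only
    have h1 : ∏ _l ∈ t \ s, (1 : ℝ) ≤ ∏ l ∈ t \ s, (1 + ν l) :=
      Finset.prod_le_prod (fun i _ => zero_le_one) (fun i _ => by linarith [hνnn i])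
    rw [Finset.prod_const_one] at h1
    have hnn : 0 ≤ ∏ l ∈ s, (1 + ν l) :=
      Finset.prod_nonneg fun l _ => by linarith [hνnn l]
    calc ∏ l ∈ s, (1 + ν l)
        ≤ (∏ l ∈ s, (1 + ν l)) * ∏ l ∈ t \ s, (1 + ν l) := le_mul_of_one_le_right hnn h1
      _ = ∏ l ∈ t, (1 + ν l) := by rw [mul_comm, Finset.prod_sdiff hst]
  have hbdd : BddAbove (Set.range fun s : Finset ℕ => ∏ l ∈ s, (1 + ν l)) := by
    refine ⟨B, ?_⟩
    rintro x ⟨s, rfl⟩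
    exact hBsplit s
  have hprod : HasProd (fun l => 1 + ν l) (⨆ s : Finset ℕ, ∏ l ∈ s, (1 + ν l)) :=
    tendsto_atTop_ciSup hmonoP hbdd
  rw [hprod.tprod_eq]
  have hsupB : (⨆ s : Finset ℕ, ∏ l ∈ s, (1 + ν l)) ≤ B := ciSup_le hBsplit
  refine hsupB.trans ?_
  have hBeq : B = Real.exp (K + C * S) * Real.exp (K * M ^ 3) := by
    rw [hBdef, ← Real.exp_add]; ring_nf
  rw [hBeq]
  have hM3 : 0 ≤ M ^ 3 := by positivity
  have hle1 : Real.exp (K + C * S) ≤ C' := by rw [hC'def]; linarith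
  have hle2 : Real.exp (K * M ^ 3) ≤ Real.exp (C' * M ^ 3) := by
    apply Real.exp_le_exp.mpr
    have hKC' : K ≤ C' := by
      rw [hC'def]; linarith [Real.exp_pos (K + C * S)]
    exact mul_le_mul_of_nonneg_right hKC' hM3
  exact mul_le_mul hle1 hle2 (Real.exp_nonneg _) (by positivity)
end

section
/- Let J ⊂ ℂ be a compact set such that there exist c > 0 and r₀ > 0 with the property: for each r < r₀ and z₀ ∈ J there is a map g : B(z₀, r) → ℂ with g(B(z₀,r) ∩ J) ⊂ J satisfying c⁻¹ r⁻¹ |z−w| ≤ |g(z)−g(w)| ≤ c r⁻¹ |z−w| for all z, w ∈ B(z₀,r). Suppose moreover there is ε₀ > 0 such that J + B(0,ε₀) has more than one connected component and every connected component of J + B(0,ε₀) has diameter at most 1/(4c). Then there exist constants K and δ₀ > 0 such that for every δ < δ₀, every connected component of J + closedBall(0,δ) has diameter at most Kδ. -/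
open Metric Set
open scoped Pointwise

private lemma seg_subset_aux {p q : ℂ} {J : Set ℂ} {ε₀ : ℝ} (hε₀ : 0 < ε₀)
    (hp : p ∈ J) (hq : q ∈ J) (hpq : dist p q ≤ ε₀) :
    segment ℝ p q ⊆ J + ball (0:ℂ) ε₀ := by
  intro z hz
  obtain ⟨a, b, ha, hb, hab, rfl⟩ := hz
  have hpq' : ‖p - q‖ ≤ ε₀ := by rwa [← dist_eq_norm]
  rcases le_or_gt a (1/2 : ℝ) with h | h
  · have hzq : a • p + b • q = q + a • (p - q) := by
      have hb' : b = 1 - a := by linarith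
      rw [hb']; module
    rw [hzq]
    refine add_mem_add hq ?_
    rw [mem_ball_zero_iff, norm_smul, Real.norm_eq_abs, abs_of_nonneg ha]
    nlinarith [norm_nonneg (p - q)]
  · have hb2 : b ≤ 1/2 := by linarith
    have hzp : a • p + b • q = p + b • (q - p) := by
      have ha' : a = 1 - b := by linarith
      rw [ha']; module
    rw [hzp]
    refine add_mem_add hp ?_
    rw [mem_ball_zero_iff, norm_smul, Real.norm_eq_abs, abs_of_nonneg hb]
    have : ‖q - p‖ ≤ ε₀ := by rwa [norm_sub_rev]
    nlinarith [norm_nonneg (q - p)]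

private lemma chain_same_component {J : Set ℂ} {ε₀ : ℝ} (hε₀ : 0 < ε₀)
    (y : ℕ → ℂ) (m : ℕ) (hy : ∀ i ≤ m, y i ∈ J)
    (hstep : ∀ i < m, dist (y i) (y (i+1)) ≤ ε₀) :
    ∀ i ≤ m, connectedComponentIn (J + ball (0:ℂ) ε₀) (y i)
      = connectedComponentIn (J + ball (0:ℂ) ε₀) (y 0) := by
  intro i hi
  induction i with
  | zero => rfl
  | succ k ih =>
    have hk : k ≤ m := by omega
    have hseg := seg_subset_aux hε₀ (hy k hk) (hy (k+1) hi) (hstep k (by omega))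
    have hsub := (convex_segment (y k) (y (k+1))).isPreconnected.subset_connectedComponentIn
        (left_mem_segment ℝ _ _) hseg
    have hmem : y (k+1) ∈ connectedComponentIn (J + ball (0:ℂ) ε₀) (y k) :=
      hsub (right_mem_segment ℝ _ _)
    rw [← connectedComponentIn_eq hmem, ih hk]

private lemma chain_bound
    (J : Set ℂ) (hJc : IsCompact J)
    (c r₀ : ℝ) (hc : 0 < c) (hr₀ : 0 < r₀)
    (hcookie : ∀ r : ℝ, 0 < r → r < r₀ → ∀ z₀ ∈ J,
      ∃ g : ℂ → ℂ, g '' (ball z₀ r ∩ J) ⊆ J ∧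
        ∀ z ∈ ball z₀ r, ∀ w ∈ ball z₀ r,
          c⁻¹ * r⁻¹ * ‖z - w‖ ≤ ‖g z - g w‖ ∧ ‖g z - g w‖ ≤ c * r⁻¹ * ‖z - w‖)
    (ε₀ : ℝ) (hε₀ : 0 < ε₀)
    (hdiam : ∀ x ∈ J + ball (0:ℂ) ε₀,
      diam (connectedComponentIn (J + ball (0:ℂ) ε₀) x) ≤ 1 / (4 * c))
    (M : ℝ) (hM : M = 2*c/ε₀ + 8)
    (δ : ℝ) (hδ : 0 < δ) (hδr₀ : M*δ < r₀)
    (a₀ : ℂ) (ha₀ : a₀ ∈ J)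
    (n : ℕ) (x : ℕ → ℂ) (hx0 : x 0 = a₀)
    (hxJ : ∀ i ≤ n, x i ∈ J)
    (hxs : ∀ i < n, dist (x (i+1)) (x i) ≤ 2*δ) :
    dist (x n) a₀ < M*δ := by
  classical
  by_contra hcon
  push_neg at hcon
  have hM8 : (8:ℝ) ≤ M := by
    have h0 : 0 ≤ 2*c/ε₀ := by positivity
    rw [hM]; linarith
  have hMpos : (0:ℝ) < M := by linarith
  set r : ℝ := M*δ with hr
  have hrpos : 0 < r := by positivity
  have hex : ∃ m, r ≤ dist (x m) a₀ := ⟨n, hcon⟩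
  obtain ⟨m, hmspec, hmin⟩ : ∃ m, r ≤ dist (x m) a₀ ∧ ∀ i < m, dist (x i) a₀ < r :=
    ⟨Nat.find hex, Nat.find_spec hex, fun i hi => by
      have := Nat.find_min hex hi; push_neg at this; exact this⟩
  have hmn : m ≤ n := by
    by_contra hmn
    exact absurd hcon (not_le.2 (hmin n (by omega)))
  have hm0 : m ≠ 0 := by
    intro h
    rw [h, hx0, dist_self] at hmspec
    linarith
  obtain ⟨m', rfl⟩ : ∃ m', m = m' + 1 := ⟨m - 1, by omega⟩
  have hball : ∀ i ≤ m', x i ∈ ball a₀ r := fun i hi => mem_ball.2 (hmin i (by omega))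
  obtain ⟨g, hgJ, hgbil⟩ := hcookie r hrpos hδr₀ a₀ ha₀
  set y : ℕ → ℂ := fun i => g (x i) with hy
  have hyJ : ∀ i ≤ m', y i ∈ J := fun i hi =>
    hgJ ⟨x i, ⟨hball i hi, hxJ i (by omega)⟩, rfl⟩
  -- step bound for images
  have hstepbd : c * r⁻¹ * (2*δ) ≤ ε₀ := by
    have h1 : c * r⁻¹ * (2*δ) = 2*c/M := by
      rw [hr]; field_simp
    rw [h1, div_le_iff₀ hMpos, hM]
    have h2 : ε₀ * (2*c/ε₀ + 8) = 2*c + 8*ε₀ := by field_simp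
    nlinarith
  have hystep : ∀ i < m', dist (y i) (y (i+1)) ≤ ε₀ := by
    intro i hi
    have hb1 := hball i (by omega)
    have hb2 := hball (i+1) (by omega)
    have hub := (hgbil _ hb2 _ hb1).2
    have hcr : 0 ≤ c * r⁻¹ := by positivity
    calc dist (y i) (y (i+1)) = ‖g (x (i+1)) - g (x i)‖ := by
          rw [dist_comm, dist_eq_norm]
      _ ≤ c * r⁻¹ * ‖x (i+1) - x i‖ := hub
      _ ≤ c * r⁻¹ * (2*δ) := by
          have := hxs i (by omega)
          rw [dist_eq_norm] at this
          exact mul_le_mul_of_nonneg_left this hcr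
      _ ≤ ε₀ := hstepbd
  -- lower bound on inflated distance
  have hxm' : r - 2*δ ≤ dist (x m') a₀ := by
    have h1 := hxs m' (by omega)
    have h2 : dist (x (m'+1)) a₀ ≤ dist (x (m'+1)) (x m') + dist (x m') a₀ :=
      dist_triangle _ _ _
    linarith
  have hylow : c⁻¹ * r⁻¹ * (r - 2*δ) ≤ dist (y m') (y 0) := by
    have hlb := (hgbil _ (hball m' le_rfl) _ (hball 0 (Nat.zero_le _))).1
    have hcr : 0 ≤ c⁻¹ * r⁻¹ := by positivity
    calc c⁻¹ * r⁻¹ * (r - 2*δ) ≤ c⁻¹ * r⁻¹ * ‖x m' - x 0‖ := by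
          refine mul_le_mul_of_nonneg_left ?_ hcr
          rw [← dist_eq_norm, hx0]; exact hxm'
      _ ≤ ‖g (x m') - g (x 0)‖ := hlb
      _ = dist (y m') (y 0) := (dist_eq_norm _ _).symm
  -- all images in one component of J + ball ε₀
  set F : Set ℂ := J + ball (0:ℂ) ε₀ with hF
  have hJF : J ⊆ F := by
    intro a ha
    have := add_mem_add ha (mem_ball_self hε₀ (x := (0:ℂ)))
    rwa [add_zero] at this
  have hcompeq := chain_same_component hε₀ y m' hyJ hystep m' le_rfl
  have hy0F : y 0 ∈ F := hJF (hyJ 0 (Nat.zero_le _))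
  have hym'F : y m' ∈ F := hJF (hyJ m' le_rfl)
  have hbdd : Bornology.IsBounded (connectedComponentIn F (y 0)) :=
    ((hJc.isBounded.add isBounded_ball).subset (connectedComponentIn_subset F (y 0)))
  have hy0c : y 0 ∈ connectedComponentIn F (y 0) := mem_connectedComponentIn hy0F
  have hym'c : y m' ∈ connectedComponentIn F (y 0) := by
    rw [← hcompeq]; exact mem_connectedComponentIn hym'F
  have hd : dist (y m') (y 0) ≤ 1/(4*c) :=
    le_trans (dist_le_diam_of_mem hbdd hym'c hy0c) (hdiam (y 0) hy0F)
  -- final arithmetic contradiction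
  have hkey : c⁻¹ * r⁻¹ * (r - 2*δ) ≤ 1/(4*c) := le_trans hylow hd
  have hcr : 0 < c * r := mul_pos hc hrpos
  have h3 := mul_le_mul_of_nonneg_left hkey (le_of_lt hcr)
  have hL : (c*r) * (c⁻¹ * r⁻¹ * (r - 2*δ)) = r - 2*δ := by
    field_simp
  have hR : (c*r) * (1/(4*c)) = r/4 := by
    field_simp
  rw [hL, hR] at h3
  have hr8 : 8*δ ≤ r := by
    rw [hr]; nlinarith
  linarith

/-- Diameter bound for the connected components of δ-neighbourhoods of a
cookie-cutter set `J ⊂ ℂ`. -/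
theorem components_of_neighbourhood_diam_le
    (J : Set ℂ) (hJc : IsCompact J)
    (c r₀ : ℝ) (hc : 0 < c) (hr₀ : 0 < r₀)
    (hcookie : ∀ r : ℝ, 0 < r → r < r₀ → ∀ z₀ ∈ J,
      ∃ g : ℂ → ℂ, g '' (ball z₀ r ∩ J) ⊆ J ∧
        ∀ z ∈ ball z₀ r, ∀ w ∈ ball z₀ r,
          c⁻¹ * r⁻¹ * ‖z - w‖ ≤ ‖g z - g w‖ ∧ ‖g z - g w‖ ≤ c * r⁻¹ * ‖z - w‖)
    (ε₀ : ℝ) (hε₀ : 0 < ε₀)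
    (hdisc : ∃ x ∈ J + ball (0:ℂ) ε₀, ∃ y ∈ J + ball (0:ℂ) ε₀,
      connectedComponentIn (J + ball (0:ℂ) ε₀) x ≠
        connectedComponentIn (J + ball (0:ℂ) ε₀) y)
    (hdiam : ∀ x ∈ J + ball (0:ℂ) ε₀,
      diam (connectedComponentIn (J + ball (0:ℂ) ε₀) x) ≤ 1 / (4 * c)) :
    ∃ K : ℝ, ∃ δ₀ > 0, ∀ δ : ℝ, 0 < δ → δ < δ₀ →
      ∀ x ∈ J + closedBall (0:ℂ) δ,
        diam (connectedComponentIn (J + closedBall (0:ℂ) δ) x) ≤ K * δ := by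
  classical
  set M : ℝ := 2*c/ε₀ + 8 with hM
  have hM8 : (8:ℝ) ≤ M := by
    have h0 : 0 ≤ 2*c/ε₀ := by positivity
    rw [hM]; linarith
  have hMpos : (0:ℝ) < M := by linarith
  refine ⟨2*M + 2, r₀/M, by positivity, ?_⟩
  intro δ hδ hδ₀ x hx
  have hδr₀ : M*δ < r₀ := by
    rw [← lt_div_iff₀' hMpos]; exact hδ₀
  -- decompose x
  obtain ⟨a₀, ha₀, v, hv, hxav⟩ := hx
  beta_reduce at hxav
  -- the chain class of a₀
  set A : Set ℂ := {b : ℂ | ∃ n : ℕ, ∃ p : ℕ → ℂ, p 0 = a₀ ∧ p n = b ∧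
      (∀ i ≤ n, p i ∈ J) ∧ ∀ i < n, dist (p (i+1)) (p i) ≤ 2*δ} with hA
  have ha₀A : a₀ ∈ A :=
    ⟨0, fun _ => a₀, rfl, rfl, fun i _ => ha₀, fun i h => absurd h (Nat.not_lt_zero i)⟩
  have hAJ : A ⊆ J := by
    rintro b ⟨n, p, h0, rfl, hJ', hs⟩
    exact hJ' n le_rfl
  -- the class is contained in a ball of radius M·δ
  have hAball : A ⊆ closedBall a₀ (M*δ) := by
    rintro b ⟨n, p, h0, rfl, hJ', hs⟩
    exact mem_closedBall.2
      (chain_bound J hJc c r₀ hc hr₀ hcookie ε₀ hε₀ hdiam M hM δ hδ hδr₀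
        a₀ ha₀ n p h0 hJ' hs).le
  -- extension of chains by one step
  have hext : ∀ b ∈ A, ∀ b' ∈ J, dist b' b ≤ 2*δ → b' ∈ A := by
    rintro b ⟨n, p, h0, hn, hJ', hs⟩ b' hb' hd
    refine ⟨n+1, fun i => if i ≤ n then p i else b', by simp [h0], by simp, ?_, ?_⟩
    · intro i hi
      by_cases h : i ≤ n
      · simpa [h] using hJ' i h
      · simp [h, hb']
    · intro i hi
      by_cases h : i + 1 ≤ n
      · have h' : i ≤ n := by omega
        simpa [h, h'] using hs i (by omega)
      · have h1 : i = n := by omega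
        have h2 : ¬ (i + 1 ≤ n) := by omega
        beta_reduce
        rw [if_neg h2, if_pos (le_of_eq h1), h1, hn]
        exact hd
  -- the class and its complement in J are closed
  have hAclosed : IsClosed A := by
    refine isClosed_of_closure_subset ?_
    intro b hb
    have hbJ : b ∈ J := hJc.isClosed.closure_subset (closure_mono hAJ hb)
    obtain ⟨a, haA, hab⟩ := Metric.mem_closure_iff.1 hb (2*δ) (by linarith)
    exact hext a haA b hbJ hab.le
  have hBclosed : IsClosed (J \ A) := by
    refine isClosed_of_closure_subset ?_
    intro b hb
    have hbJ : b ∈ J := hJc.isClosed.closure_subset (closure_mono diff_subset hb)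
    refine ⟨hbJ, fun hbA => ?_⟩
    obtain ⟨a, haB, hab⟩ := Metric.mem_closure_iff.1 hb (2*δ) (by linarith)
    exact haB.2 (hext b hbA a haB.1 (by rw [dist_comm] at hab; exact hab.le))
  have hAcomp : IsCompact A := hJc.of_isClosed_subset hAclosed hAJ
  have hBcomp : IsCompact (J \ A) := hJc.of_isClosed_subset hBclosed diff_subset
  set S : Set ℂ := J + closedBall (0:ℂ) δ with hS
  set Aδ : Set ℂ := A + closedBall (0:ℂ) δ with hAδ
  set Bδ : Set ℂ := (J \ A) + closedBall (0:ℂ) δ with hBδ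
  have hcover : S ⊆ Aδ ∪ Bδ := by
    rintro z ⟨a, ha, u, hu, rfl⟩
    by_cases h : a ∈ A
    · exact Or.inl (add_mem_add h hu)
    · exact Or.inr (add_mem_add ⟨ha, h⟩ hu)
  have hdisj : Disjoint Aδ Bδ := by
    rw [Set.disjoint_left]
    rintro z ⟨a, ha, u, hu, rfl⟩ ⟨b, hb, w, hw, hbw⟩
    beta_reduce at hbw
    refine hb.2 (hext a ha b hb.1 ?_)
    have h1 : b - a = u - w := by linear_combination hbw
    rw [dist_eq_norm, h1]
    calc ‖u - w‖ ≤ ‖u‖ + ‖w‖ := norm_sub_le _ _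
      _ ≤ δ + δ := add_le_add (mem_closedBall_zero_iff.1 hu) (mem_closedBall_zero_iff.1 hw)
      _ = 2*δ := by ring
  have hAδcomp : IsCompact Aδ := hAcomp.add (isCompact_closedBall 0 δ)
  have hBδcomp : IsCompact Bδ := hBcomp.add (isCompact_closedBall 0 δ)
  obtain ⟨U, V, hU, hV, hAU, hBV, hUV⟩ :=
    SeparatedNhds.of_isCompact_isCompact hAδcomp hBδcomp hdisj
  have hxA : x ∈ Aδ := by rw [← hxav]; exact add_mem_add ha₀A hv
  have hxS : x ∈ S := by rw [← hxav]; exact add_mem_add ha₀ hv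
  set C : Set ℂ := connectedComponentIn S x with hC
  have hCS : C ⊆ S := connectedComponentIn_subset S x
  have hCU : C ⊆ U :=
    IsPreconnected.subset_left_of_subset_union hU hV hUV (fun z hz => Set.union_subset_union hAU hBV (hcover (hCS hz)))
      ⟨x, mem_connectedComponentIn hxS, hAU hxA⟩ (isPreconnected_connectedComponentIn)
  have hCA : C ⊆ Aδ := by
    intro z hz
    rcases hcover (hCS hz) with h | h
    · exact h
    · exact absurd (hCU hz) (Set.disjoint_right.1 hUV (hBV h))
  -- hence C lies in a ball of radius M·δ + δ
  have hCball : C ⊆ closedBall a₀ (M*δ + δ) := by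
    rintro z hz
    obtain ⟨a, ha, u, hu, rfl⟩ := hCA hz
    have h1 : dist a a₀ ≤ M*δ := mem_closedBall.1 (hAball ha)
    have h2 : ‖u‖ ≤ δ := mem_closedBall_zero_iff.1 hu
    have : dist (a + u) a₀ ≤ dist (a + u) a + dist a a₀ := dist_triangle _ _ _
    have h3 : dist (a + u) a = ‖u‖ := by
      rw [dist_eq_norm]; ring_nf
    rw [mem_closedBall]
    rw [h3] at this
    linarith
  calc diam C ≤ diam (closedBall a₀ (M*δ + δ)) :=
        diam_mono hCball isBounded_closedBall
    _ ≤ 2 * (M*δ + δ) := diam_closedBall (by positivity)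
    _ = (2*M + 2) * δ := by ring
end

section
/- Let D ⊂ ℂ be compact such that every connected component of E = D + B(0,δ) has diameter at most Kδ. Then for any λ ∈ (0,1) and any connected component E_i of E, there exists a cover U_i ⊂ E_i of D_i = E_i ∩ D by at most K'(λ, K) open balls of radius δ centered at points of D_i such that dist(z, ∂U_i) ≥ λδ for every z ∈ D_i. -/
open Metric Set MeasureTheory Module
open scoped Pointwise ENNReal NNReal

/-!
A maximal `(1 - λ)δ`-separated subset of `D_i` is a `(1 - λ)δ`-net of `D_i`, so the `δ`-balls
around its points contain the `λδ`-neighbourhood of `D_i`; this keeps `D_i` at distance at least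
`λδ` from the boundary of their union. Each of these balls is a connected subset of `E` meeting
`E_i`, hence lies in `E_i`. Finally, `D_i` has diameter at most `Kδ`, and comparing the area of
the disjoint balls of radius `(1 - λ)δ/2` around the net with that of a ball of radius
`Kδ + (1 - λ)δ/2` bounds the size of the net by `(2K/(1 - λ) + 1)²`.
-/

namespace Metric

section Packing

variable {E : Type*} [NormedAddCommGroup E] [NormedSpace ℝ E] [FiniteDimensional ℝ E]

theorem IsSeparated.card_le_of_subset_closedBall {T : Finset E} {ε : ℝ≥0}
    (hε : 0 < ε) (hT : IsSeparated ε (T : Set E)) {x : E} {ρ : ℝ} (hρ : 0 ≤ ρ)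
    (hTx : (T : Set E) ⊆ closedBall x ρ) :
    (T.card : ℝ) ≤ (2 * ρ / ε + 1) ^ finrank ℝ E := by
  borelize E
  set μ : Measure E := Measure.addHaar
  set r : ℝ := ε / 2
  have hr : 0 < r := by positivity
  have hdisj : (T : Set E).PairwiseDisjoint (ball · r) := fun a ha b hb hab => by
    refine ball_disjoint_ball ?_
    have : (ε : ℝ≥0∞) < edist a b := hT ha hb hab
    rw [edist_nndist, ENNReal.coe_lt_coe, ← NNReal.coe_lt_coe, coe_nndist] at this
    linarith [show r + r = ε by ring]
  have hsub : (⋃ t ∈ T, ball t r) ⊆ ball x (ρ + r) := iUnion₂_subset fun t ht =>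
    ball_subset_ball' (by linarith [mem_closedBall.1 (hTx ht)])
  have hvol : (T.card : ℝ≥0∞) * ENNReal.ofReal (r ^ finrank ℝ E)
      ≤ ENNReal.ofReal ((ρ + r) ^ finrank ℝ E) := by
    have h1 := measure_ball_pos μ (0 : E) one_pos
    have h2 := (measure_ball_lt_top (μ := μ) (x := (0 : E)) (r := 1)).ne
    rw [← ENNReal.mul_le_mul_iff_left h1.ne' h2]
    calc (T.card : ℝ≥0∞) * ENNReal.ofReal (r ^ finrank ℝ E) * μ (ball 0 1)
        = ∑ t ∈ T, μ (ball t r) := by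
          simp [μ.addHaar_ball_of_pos _ hr, Finset.sum_const, nsmul_eq_mul, mul_assoc]
      _ = μ (⋃ t ∈ T, ball t r) :=
          (measure_biUnion_finset hdisj fun _ _ => measurableSet_ball).symm
      _ ≤ μ (ball x (ρ + r)) := measure_mono hsub
      _ = _ := μ.addHaar_ball_of_pos _ (by positivity)
  rw [← ENNReal.ofReal_natCast, ← ENNReal.ofReal_mul (by positivity),
    ENNReal.ofReal_le_ofReal_iff (by positivity)] at hvol
  have hρr : ρ + r = (2 * ρ / ε + 1) * r := by field_simp [r]; ring
  rw [hρr, mul_pow] at hvol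
  exact le_of_mul_le_mul_right hvol (by positivity)

theorem IsSeparated.encard_le_of_subset_closedBall {C : Set E} {ε : ℝ≥0}
    (hε : 0 < ε) (hC : IsSeparated ε C) {x : E} {ρ : ℝ} (hρ : 0 ≤ ρ)
    (hCx : C ⊆ closedBall x ρ) :
    C.encard ≤ ⌈(2 * ρ / ε + 1) ^ finrank ℝ E⌉₊ := by
  by_contra! hlt
  obtain ⟨t, htC, ht⟩ := exists_subset_encard_eq (Order.add_one_le_of_lt hlt)
  obtain ⟨T, rfl⟩ := (finite_of_encard_eq_coe ht).exists_finset_coe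
  rw [encard_coe_eq_coe_finsetCard] at ht
  have hcard := (hC.subset htC).card_le_of_subset_closedBall hε hρ (htC.trans hCx)
  have := (Nat.le_ceil _).trans' hcard
  norm_cast at ht this
  omega

theorem packingNumber_le_of_subset_closedBall {A : Set E} {ε : ℝ≥0} (hε : 0 < ε)
    {x : E} {ρ : ℝ} (hρ : 0 ≤ ρ) (hAx : A ⊆ closedBall x ρ) :
    packingNumber ε A ≤ ⌈(2 * ρ / ε + 1) ^ finrank ℝ E⌉₊ :=
  iSup₂_le fun _ hCA => iSup_le fun hC =>
    hC.encard_le_of_subset_closedBall hε hρ (hCA.trans hAx)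

end Packing

variable {X : Type*} [PseudoMetricSpace X]

theorem exists_fin_cover_of_packingNumber_le {ε : ℝ≥0} {A : Set X} {N : ℕ}
    (hA : packingNumber ε A ≤ N) :
    ∃ n ≤ N, ∃ p : Fin n → X, (∀ i, p i ∈ A) ∧ A ⊆ ⋃ i, closedBall (p i) ε := by
  have hfin : packingNumber ε A ≠ ⊤ := ne_top_of_le_ne_top (by simp) hA
  obtain ⟨hSfin, hSN⟩ := encard_le_coe_iff_finite_ncard_le.1
    ((encard_maximalSeparatedSet hfin).trans_le hA)
  obtain ⟨n, p, hp, hpS⟩ := hSfin.fin_param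
  refine ⟨n, ?_, p, fun i => maximalSeparatedSet_subset (hpS ▸ mem_range_self i), ?_⟩
  · simpa [← hpS, ncard_range_of_injective hp] using hSN
  · simpa [← hpS, biUnion_range] using
      isCover_iff_subset_iUnion_closedBall.1 (isCover_maximalSeparatedSet hfin)

theorem le_infDist_frontier_of_ball_subset {U : Set X} (hU : IsOpen U)
    (hne : (frontier U).Nonempty) {z : X} {ρ : ℝ} (hzU : ball z ρ ⊆ U) :
    ρ ≤ infDist z (frontier U) :=
  (le_infDist hne).2 fun _ hy => not_lt.1 fun hlt =>
    (hU.frontier_eq ▸ hy).2 (hzU (mem_ball'.2 hlt))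

end Metric

theorem ball_subset_connectedComponentIn_add_ball {E : Type*} [SeminormedAddCommGroup E]
    [NormedSpace ℝ E] {D : Set E} {δ : ℝ} (hδ : 0 < δ) {x p : E}
    (hp : p ∈ connectedComponentIn (D + ball 0 δ) x) (hpD : p ∈ D) :
    ball p δ ⊆ connectedComponentIn (D + ball 0 δ) x := by
  rw [connectedComponentIn_eq hp]
  exact (convex_ball p δ).isPreconnected.subset_connectedComponentIn (mem_ball_self hδ)
    (by rw [add_ball_zero]; exact ball_subset_thickening hpD δ)

/-- Finite cover lemma: if every connected component of `E = D + B(0,δ)` has diameter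
at most `Kδ`, then for any `λ ∈ (0,1)` each set `D_i = E_i ∩ D` (with `E_i` a connected
component of `E`) can be covered by at most `K'(λ,K)` balls of radius `δ` centered at
points of `D_i`, the cover `U_i` lying in `E_i` and satisfying `dist(z, ∂U_i) ≥ λδ`
for all `z ∈ D_i`. -/
theorem finite_cover_of_component (K lam : ℝ) (hlam : lam ∈ Ioo (0:ℝ) 1) :
    ∃ K' : ℕ, ∀ (D : Set ℂ), IsCompact D → ∀ δ : ℝ, 0 < δ →
      (∀ x ∈ D + ball (0:ℂ) δ,
        diam (connectedComponentIn (D + ball (0:ℂ) δ) x) ≤ K * δ) →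
      ∀ x ∈ D + ball (0:ℂ) δ,
        ∃ n : ℕ, n ≤ K' ∧ ∃ p : Fin n → ℂ,
          (∀ i, p i ∈ connectedComponentIn (D + ball (0:ℂ) δ) x ∩ D) ∧
          (⋃ i, ball (p i) δ) ⊆ connectedComponentIn (D + ball (0:ℂ) δ) x ∧
          connectedComponentIn (D + ball (0:ℂ) δ) x ∩ D ⊆ (⋃ i, ball (p i) δ) ∧
          ∀ z ∈ connectedComponentIn (D + ball (0:ℂ) δ) x ∩ D,
            lam * δ ≤ infDist z (frontier (⋃ i, ball (p i) δ)) := by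
  obtain ⟨hlam0, hlam1⟩ := hlam
  refine ⟨⌈(2 * |K| / (1 - lam) + 1) ^ 2⌉₊, fun D hD δ hδ hdiam x hx => ?_⟩
  set C := connectedComponentIn (D + ball (0:ℂ) δ) x
  have hε : 0 < (1 - lam) * δ := mul_pos (sub_pos.2 hlam1) hδ
  set ε : ℝ≥0 := ⟨(1 - lam) * δ, hε.le⟩
  have hεval : (ε : ℝ) = (1 - lam) * δ := rfl
  have hCbdd : Bornology.IsBounded C :=
    (hD.isBounded.add isBounded_ball).subset (connectedComponentIn_subset _ _)
  have hCx : C ∩ D ⊆ closedBall x (|K| * δ) := fun z hz =>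
    (dist_le_diam_of_mem hCbdd hz.1 (mem_connectedComponentIn hx)).trans
      ((hdiam x hx).trans (by gcongr; exact le_abs_self K))
  have hpack := packingNumber_le_of_subset_closedBall (ε := ε) hε (by positivity) hCx
  rw [Complex.finrank_real_complex,
    show 2 * (|K| * δ) / ε = 2 * |K| / (1 - lam) by rw [hεval]; field_simp] at hpack
  obtain ⟨n, hn, p, hpC, hcover⟩ := exists_fin_cover_of_packingNumber_le hpack
  have hUC : ⋃ i, ball (p i) δ ⊆ C := iUnion_subset fun i =>
    ball_subset_connectedComponentIn_add_ball hδ (hpC i).1 (hpC i).2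
  have hball : ∀ z ∈ C ∩ D, ball z (lam * δ) ⊆ ⋃ i, ball (p i) δ := fun z hz => by
    obtain ⟨i, hi⟩ := mem_iUnion.1 (hcover hz)
    refine (ball_subset_ball' ?_).trans (subset_iUnion (fun i => ball (p i) δ) i)
    linarith [mem_closedBall.1 hi]
  refine ⟨n, hn, p, hpC, hUC, fun z hz => hball z hz (mem_ball_self (by positivity)),
    fun z hz => le_infDist_frontier_of_ball_subset (isOpen_iUnion fun _ => isOpen_ball) ?_
      (hball z hz)⟩
  exact nonempty_frontier_iff.2 ⟨⟨z, hball z hz (mem_ball_self (by positivity))⟩,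
    fun h => NormedSpace.unbounded_univ ℝ ℂ (h ▸ hCbdd.subset hUC)⟩
end

section
/- Let 0 < A < B be real numbers and δ > 0 satisfy A^{−δ} + B^{−δ} = 1 (note A > 1 forces uniqueness of δ > 0 when A > 1). For s ∈ ℂ with Re s > 0, define Z̃(s) = ∏_{k=0}^∞ (1 − A^{−(s+k)} − B^{−(s+k)}). If A > 1, then the infinite product converges for Re s > 0, Z̃(δ) = 0, and if log A / log B is irrational then s = δ is the only zero of Z̃ on the line Re s = δ. -/
/-!
Each term `C^{-(s+k)}` with `C > 1` decays geometrically in `k`, so the product converges for every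
`s` and vanishes exactly where one of its factors does; the factor `k = 0` vanishes at `s = δ`.
On the line `Re s = δ` a factor with `k ≥ 1` cannot vanish, since
`|A^{-(s+k)}| + |B^{-(s+k)}| < A^{-δ} + B^{-δ} = 1`. For `k = 0`, the identity
`A^{-s} + B^{-s} = 1 = |A^{-s}| + |B^{-s}|` is the equality case of the triangle inequality, so
`A^{-s}` and `B^{-s}` are positive reals. Then `Im s · log A` and `Im s · log B` both lie in `2πℤ`,
which for irrational `log A / log B` forces `Im s = 0`.
-/

open Real

lemma tprod_one_add_eq_zero_iff_of_summable {ι R : Type*} [NormedCommRing R] [CompleteSpace R]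
    [NormMulClass R] [NormOneClass R] {f : ι → R} (hf : Summable (‖f ·‖)) :
    ∏' i, (1 + f i) = 0 ↔ ∃ i, 1 + f i = 0 := by
  refine ⟨fun h => ?_, tprod_of_exists_eq_zero⟩
  by_contra! hne
  exact tprod_one_add_ne_zero_of_summable hne hf h

lemma Complex.eq_norm_of_add_eq_norm_add_norm {u v : ℂ} (h : u + v = ‖u‖ + ‖v‖) :
    u = ‖u‖ ∧ v = ‖v‖ := by
  have hre : u.re + v.re = ‖u‖ + ‖v‖ := by simpa using congrArg Complex.re h
  have hu : u.re = ‖u‖ := le_antisymm (re_le_norm u) (by linarith [re_le_norm v])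
  have hv : v.re = ‖v‖ := le_antisymm (re_le_norm v) (by linarith [re_le_norm u])
  exact ⟨eq_coe_norm_of_nonneg (re_eq_norm.1 hu), eq_coe_norm_of_nonneg (re_eq_norm.1 hv)⟩

lemma Complex.exists_int_im_eq_of_exp_eq_norm {z : ℂ} (h : exp z = ‖exp z‖) :
    ∃ n : ℤ, z.im = n * (2 * π) := by
  rw [norm_exp, ofReal_exp, exp_eq_exp_iff_exists_int] at h
  obtain ⟨n, hn⟩ := h
  exact ⟨n, by simpa using congrArg im hn⟩

lemma eq_zero_of_mul_eq_intCast_mul_of_irrational {t a b c : ℝ} {m n : ℤ} (hb : b ≠ 0)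
    (hirr : Irrational (a / b)) (ha : t * a = m * c) (hbn : t * b = n * c) : t = 0 := by
  by_contra ht
  have hnc : (n : ℝ) * c ≠ 0 := hbn ▸ mul_ne_zero ht hb
  apply hirr
  refine ⟨m / n, ?_⟩
  push_cast
  rw [← mul_div_mul_left a b ht, ha, hbn, mul_div_mul_right _ _ (right_ne_zero_of_mul hnc)]

lemma norm_cexp_neg_mul_log {C : ℝ} (hC : 0 < C) (z : ℂ) :
    ‖Complex.exp (-z * Real.log C)‖ = C ^ (-z.re) := by
  rw [Complex.norm_exp, Real.rpow_def_of_pos hC]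
  simp [mul_comm]

lemma cexp_neg_ofReal_mul_log {C : ℝ} (hC : 0 < C) (x : ℝ) :
    Complex.exp (-(x : ℂ) * Real.log C) = (C ^ (-x) : ℝ) := by
  rw [Real.rpow_def_of_pos hC, Complex.ofReal_exp]
  push_cast
  ring_nf

lemma summable_norm_cexp_neg_add_mul_log {C : ℝ} (hC : 1 < C) (s : ℂ) :
    Summable fun k : ℕ => ‖Complex.exp (-(s + k) * Real.log C)‖ := by
  have hC₀ : 0 < C := by linarith
  have hgeom : ∀ k : ℕ, ‖Complex.exp (-(s + k) * Real.log C)‖ = C ^ (-s.re) * C⁻¹ ^ k := by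
    intro k
    rw [norm_cexp_neg_mul_log hC₀, inv_pow, ← Real.rpow_natCast, ← Real.rpow_neg hC₀.le,
      ← Real.rpow_add hC₀]
    congr 1
    simp
    ring
  simp_rw [hgeom]
  exact (summable_geometric_of_lt_one (by positivity) (inv_lt_one_of_one_lt₀ hC)).mul_left _

noncomputable def modelZetaFactor (A B : ℝ) (s : ℂ) (k : ℕ) : ℂ :=
  1 - Complex.exp (-(s + k) * Real.log A) - Complex.exp (-(s + k) * Real.log B)

section ModelZetaFactor

variable {A B : ℝ}

lemma summable_norm_modelZetaFactor_sub_one (hA : 1 < A) (hB : 1 < B) (s : ℂ) :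
    Summable fun k => ‖modelZetaFactor A B s k - 1‖ := by
  refine .of_nonneg_of_le (fun _ => norm_nonneg _) (fun k => ?_)
    ((summable_norm_cexp_neg_add_mul_log hA s).add (summable_norm_cexp_neg_add_mul_log hB s))
  calc ‖modelZetaFactor A B s k - 1‖
      = ‖Complex.exp (-(s + k) * Real.log A) + Complex.exp (-(s + k) * Real.log B)‖ := by
        rw [modelZetaFactor, ← norm_neg]
        ring_nf
    _ ≤ _ := norm_add_le _ _

lemma multipliable_modelZetaFactor (hA : 1 < A) (hB : 1 < B) (s : ℂ) :
    Multipliable (modelZetaFactor A B s) := by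
  simpa using multipliable_one_add_of_summable (summable_norm_modelZetaFactor_sub_one hA hB s)

lemma tprod_modelZetaFactor_eq_zero_iff (hA : 1 < A) (hB : 1 < B) (s : ℂ) :
    ∏' k, modelZetaFactor A B s k = 0 ↔ ∃ k, modelZetaFactor A B s k = 0 := by
  simpa using
    tprod_one_add_eq_zero_iff_of_summable (summable_norm_modelZetaFactor_sub_one hA hB s)

lemma modelZetaFactor_ofReal_zero (hA : 0 < A) (hB : 0 < B) (x : ℝ) :
    modelZetaFactor A B x 0 = 1 - ((A ^ (-x) + B ^ (-x) : ℝ) : ℂ) := by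
  rw [modelZetaFactor, Nat.cast_zero, add_zero, cexp_neg_ofReal_mul_log hA,
    cexp_neg_ofReal_mul_log hB]
  push_cast
  ring

lemma one_le_rpow_add_rpow_of_modelZetaFactor_eq_zero (hA : 0 < A) (hB : 0 < B) {s : ℂ} {k : ℕ}
    (h : modelZetaFactor A B s k = 0) :
    1 ≤ A ^ (-(s.re + k)) + B ^ (-(s.re + k)) := by
  calc (1 : ℝ)
      = ‖Complex.exp (-(s + k) * Real.log A) + Complex.exp (-(s + k) * Real.log B)‖ := by
        rw [modelZetaFactor] at h
        rw [← norm_one (α := ℂ)]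
        congr 1
        linear_combination h
    _ ≤ _ := norm_add_le _ _
    _ = _ := by rw [norm_cexp_neg_mul_log hA, norm_cexp_neg_mul_log hB]; simp

variable {δ : ℝ} {s : ℂ}

lemma eq_zero_of_modelZetaFactor_eq_zero (hA : 1 < A) (hB : 1 < B)
    (hdim : A ^ (-δ) + B ^ (-δ) = 1) (hre : s.re = δ) {k : ℕ}
    (h : modelZetaFactor A B s k = 0) : k = 0 := by
  by_contra hk
  have hlt : -(δ + k) < -δ := by
    have : (0 : ℝ) < k := by positivity
    linarith
  have hle := one_le_rpow_add_rpow_of_modelZetaFactor_eq_zero (by linarith) (by linarith) h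
  rw [hre] at hle
  linarith [Real.rpow_lt_rpow_of_exponent_lt hA hlt, Real.rpow_lt_rpow_of_exponent_lt hB hlt]

lemma cexp_eq_norm_of_modelZetaFactor_zero_eq_zero (hA : 0 < A) (hB : 0 < B)
    (hdim : A ^ (-δ) + B ^ (-δ) = 1) (hre : s.re = δ) (h : modelZetaFactor A B s 0 = 0) :
    Complex.exp (-s * Real.log A) = ‖Complex.exp (-s * Real.log A)‖ ∧
      Complex.exp (-s * Real.log B) = ‖Complex.exp (-s * Real.log B)‖ := by
  apply Complex.eq_norm_of_add_eq_norm_add_norm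
  rw [modelZetaFactor, Nat.cast_zero, add_zero] at h
  rw [norm_cexp_neg_mul_log hA, norm_cexp_neg_mul_log hB, hre, ← Complex.ofReal_add, hdim,
    Complex.ofReal_one]
  linear_combination -h

end ModelZetaFactor

theorem model_zeta_zeros_general (A B δ : ℝ) (hA : 1 < A) (hAB : A < B)
    (hdim : A ^ (-δ) + B ^ (-δ) = 1) :
    (∀ s : ℂ, 0 < s.re → Multipliable (fun k : ℕ =>
        1 - Complex.exp (-(s + k) * Real.log A)
          - Complex.exp (-(s + k) * Real.log B))) ∧
    (∏' k : ℕ, (1 - Complex.exp (-((δ : ℂ) + k) * Real.log A)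
          - Complex.exp (-((δ : ℂ) + k) * Real.log B))) = 0 ∧
    (Irrational (Real.log A / Real.log B) →
      ∀ s : ℂ, s.re = δ →
        (∏' k : ℕ, (1 - Complex.exp (-(s + k) * Real.log A)
          - Complex.exp (-(s + k) * Real.log B))) = 0 → s = δ) := by
  have hB : 1 < B := hA.trans hAB
  have hA₀ : 0 < A := by linarith
  have hB₀ : 0 < B := by linarith
  have hfactor : modelZetaFactor A B δ 0 = 0 := by
    rw [modelZetaFactor_ofReal_zero hA₀ hB₀, hdim, Complex.ofReal_one, sub_self]
  refine ⟨fun s _ => multipliable_modelZetaFactor hA hB s, tprod_of_exists_eq_zero ⟨0, hfactor⟩,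
    fun hirr s hre hzero => ?_⟩
  obtain ⟨k, hk⟩ := (tprod_modelZetaFactor_eq_zero_iff hA hB s).1 hzero
  obtain rfl := eq_zero_of_modelZetaFactor_eq_zero hA hB hdim hre hk
  obtain ⟨hAs, hBs⟩ := cexp_eq_norm_of_modelZetaFactor_zero_eq_zero hA₀ hB₀ hdim hre hk
  obtain ⟨m, hm⟩ := Complex.exists_int_im_eq_of_exp_eq_norm hAs
  obtain ⟨n, hn⟩ := Complex.exists_int_im_eq_of_exp_eq_norm hBs
  have him : -s.im = 0 := eq_zero_of_mul_eq_intCast_mul_of_irrational (Real.log_pos hB).ne' hirr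
    (by simpa using hm) (by simpa using hn)
  exact Complex.ext (by simpa using hre) (by simpa using him)

/-- The model zeta function `Z̃(s) = ∏_{k≥0} (1 − A^{−(s+k)} − B^{−(s+k)})`:
for `1 < A < B` and `δ > 0` with `A^{−δ} + B^{−δ} = 1`, the product converges for
`Re s > 0`, vanishes at `s = δ`, and if `log A / log B` is irrational then `s = δ`
is the only zero on the line `Re s = δ`. -/
theorem model_zeta_zeros (A B δ : ℝ) (hA : 1 < A) (hAB : A < B) (hδ : 0 < δ)
    (hdim : A ^ (-δ) + B ^ (-δ) = 1) :
    (∀ s : ℂ, 0 < s.re → Multipliable (fun k : ℕ =>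
        1 - Complex.exp (-(s + k) * Real.log A)
          - Complex.exp (-(s + k) * Real.log B))) ∧
    (∏' k : ℕ, (1 - Complex.exp (-((δ : ℂ) + k) * Real.log A)
          - Complex.exp (-((δ : ℂ) + k) * Real.log B))) = 0 ∧
    (Irrational (Real.log A / Real.log B) →
      ∀ s : ℂ, s.re = δ →
        (∏' k : ℕ, (1 - Complex.exp (-(s + k) * Real.log A)
          - Complex.exp (-(s + k) * Real.log B))) = 0 → s = δ) :=
  model_zeta_zeros_general A B δ hA hAB hdim
end
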